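/- Let U be a finite submodular universe of separations and 𝒫 a robust set of profiles in U. For each pair P, P' of distinguishable profiles in 𝒫 let A_{P,P'} = {a ∈ U : a distinguishes P and P' efficiently}. Then the family of these sets A_{P,P'} splinters. -/

import Mathlib

/-!
Let `a` efficiently distinguish `P, P'` and `b` efficiently distinguish `Q, Q'`, with `a, b`
crossing and `|a| ≤ |b|`. If `a` distinguished `Q, Q'` it would do so efficiently, so after
replacing `a` by `a*` both `Q` and `Q'` contain `a`; say `b ∈ Q` and `b* ∈ Q'`. Whichever of the
corners `a ⊔ b`, `a ⊔ b*` has order at most `|b|` then distinguishes `Q, Q'` efficiently. If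
neither does, submodularity pushes both `a ⊓ b` and `a ⊓ b*` below `|a|`; being too small to
distinguish `P, P'`, they lie in the profile containing `a*`, which contradicts its robustness.
-/

variable {U : Type*}

/-- `star` is an order-reversing involution: `s** = s` and `r ≤ s ↔ s* ≤ r*`. -/
def OrderReversingInvolution [Lattice U] (star : U → U) : Prop :=
  (∀ s : U, star (star s) = s) ∧ ∀ r s : U, r ≤ s ↔ star s ≤ star r

/-- Two separations are nested if they have comparable orientations. -/
def Nested [Lattice U] (star : U → U) (r s : U) : Prop :=
  r ≤ s ∨ r ≤ star s ∨ star r ≤ s ∨ star r ≤ star s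

/-- `O` is an orientation of `S`: it contains, for each `s ∈ S`, exactly one
of `s` and `star s`. -/
def Orients [Lattice U] (star : U → U) (S O : Set U) : Prop :=
  O ⊆ S ∧ ∀ s ∈ S, (s ∈ O ∨ star s ∈ O) ∧ (s ∈ O → star s ∈ O → s = star s)

/-- `O` is consistent: there are no `r, s ∈ O` with `star r < s`. -/
def Consistent [Lattice U] (star : U → U) (O : Set U) : Prop :=
  ∀ r ∈ O, ∀ s ∈ O, ¬ star r < s

/-- A profile of `S` is a consistent orientation `P` of `S` such that for all
`r, s ∈ P` we have `star r ⊓ star s ∉ P`. -/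
def IsProfile [Lattice U] (star : U → U) (S P : Set U) : Prop :=
  Orients star S P ∧ Consistent star P ∧
    ∀ r ∈ P, ∀ s ∈ P, star r ⊓ star s ∉ P

/-- A profile in `U` (with order function `f`) is a `k`-profile for some
integer `k`, i.e. a profile of `S_k = {s | f s < k}`. -/
def IsProfileIn [Lattice U] (star : U → U) (f : U → ℝ) (P : Set U) : Prop :=
  ∃ k : ℤ, IsProfile star {s : U | f s < (k : ℝ)} P

/-- `s` distinguishes `P` and `P'`: one orientation of `s` lies in `P` and the
other in `P'`. -/
def Distinguishes [Lattice U] (star : U → U) (s : U) (P P' : Set U) : Prop :=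
  (s ∈ P ∧ star s ∈ P') ∨ (star s ∈ P ∧ s ∈ P')

/-- `s` distinguishes `P` and `P'` efficiently: it does so and has minimum
order among all separations distinguishing `P` and `P'`. -/
def EffDist [Lattice U] (star : U → U) (f : U → ℝ) (s : U) (P P' : Set U) : Prop :=
  Distinguishes star s P P' ∧ ∀ t : U, Distinguishes star t P P' → f s ≤ f t

/-- A profile `P` is robust if there are no `r, s` with `star r ∈ P`,
`r ⊓ s ∈ P`, `r ⊓ star s ∈ P`, `f (r ⊓ s) < f r` and `f (r ⊓ star s) < f r`. -/
def RobustProfile [Lattice U] (star : U → U) (f : U → ℝ) (P : Set U) : Prop :=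
  ¬ ∃ r s : U, star r ∈ P ∧ r ⊓ s ∈ P ∧ r ⊓ star s ∈ P ∧
      f (r ⊓ s) < f r ∧ f (r ⊓ star s) < f r


/-- Two separations cross if they are not nested. -/
def Crosses [Lattice U] (star : U → U) (r s : U) : Prop := ¬ Nested star r s

/-- `c` is a corner separation of `r` and `s`: a join of orientations of `r`
and `s`, or the involution of such a join. -/
def IsCornerSep [Lattice U] (star : U → U) (c r s : U) : Prop :=
  ∃ r' s', (r' = r ∨ r' = star r) ∧ (s' = s ∨ s' = star s) ∧
    (c = r' ⊔ s' ∨ c = star (r' ⊔ s'))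

/-- A family `A` of subsets of `U` splinters if for all `i`, `j` and every
crossing pair `a ∈ A i \ A j`, `b ∈ A j \ A i`, at least one corner separation
of `a` and `b` lies in `A i ∪ A j`. -/
def Splinters [Lattice U] (star : U → U) {I : Type*} (A : I → Set U) : Prop :=
  ∀ i j : I, ∀ a ∈ A i, a ∉ A j → ∀ b ∈ A j, b ∉ A i → Crosses star a b →
    ∃ c, IsCornerSep star c a b ∧ c ∈ A i ∪ A j

section

variable [Lattice U] {star : U → U} {f : U → ℝ} {P P' Q Q' : Set U} {a b c r s : U}

theorem OrderReversingInvolution.star_le_star_iff (hstar : OrderReversingInvolution star) :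
    star r ≤ star s ↔ s ≤ r :=
  (hstar.2 s r).symm

theorem OrderReversingInvolution.star_lt_star_iff (hstar : OrderReversingInvolution star) :
    star r < star s ↔ s < r := by
  simp only [lt_iff_le_not_ge, hstar.star_le_star_iff]

theorem OrderReversingInvolution.star_sup (hstar : OrderReversingInvolution star) (r s : U) :
    star (r ⊔ s) = star r ⊓ star s := by
  have le_star : ∀ {x y : U}, x ≤ star y ↔ y ≤ star x := fun {x y} => by
    rw [← hstar.star_le_star_iff, hstar.1]
  refine le_antisymm (le_inf (hstar.star_le_star_iff.2 le_sup_left)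
    (hstar.star_le_star_iff.2 le_sup_right)) ?_
  exact le_star.1 (sup_le (le_star.1 inf_le_left) (le_star.1 inf_le_right))

theorem Nested.symm (hstar : OrderReversingInvolution star) (h : Nested star a b) :
    Nested star b a := by
  simp only [Nested, hstar.2 b, hstar.2 (star b), hstar.1] at h ⊢
  tauto

theorem Crosses.symm (hstar : OrderReversingInvolution star) (h : Crosses star a b) :
    Crosses star b a :=
  fun hba => h (hba.symm hstar)

theorem crosses_star_left_iff (hinv : ∀ s : U, star (star s) = s) :
    Crosses star (star a) b ↔ Crosses star a b := by
  simp only [Crosses, Nested, hinv]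
  tauto

theorem Crosses.not_le (h : Crosses star a b) : ¬ a ≤ b :=
  fun hab => h (Or.inl hab)

theorem Crosses.not_le_star (h : Crosses star a b) : ¬ a ≤ star b :=
  fun hab => h (Or.inr (Or.inl hab))

theorem IsCornerSep.symm (h : IsCornerSep star c a b) : IsCornerSep star c b a := by
  obtain ⟨r', s', hr', hs', hc⟩ := h
  exact ⟨s', r', hs', hr', sup_comm r' s' ▸ hc⟩

theorem IsCornerSep.of_star_left (hinv : ∀ s : U, star (star s) = s)
    (h : IsCornerSep star c (star a) b) : IsCornerSep star c a b := by
  obtain ⟨r', s', hr', hs', hc⟩ := h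
  rw [hinv] at hr'
  exact ⟨r', s', hr'.symm, hs', hc⟩

theorem Distinguishes.symm (h : Distinguishes star s P P') : Distinguishes star s P' P :=
  (Or.symm h).imp And.symm And.symm

theorem Distinguishes.mem_or_star_mem_left (h : Distinguishes star s P P') :
    s ∈ P ∨ star s ∈ P :=
  h.imp And.left And.left

theorem EffDist.symm (h : EffDist star f s P P') : EffDist star f s P' P :=
  ⟨h.1.symm, fun t ht => h.2 t ht.symm⟩

theorem EffDist.of_le (hb : EffDist star f b Q Q') (hc : Distinguishes star c Q Q')
    (h : f c ≤ f b) : EffDist star f c Q Q' :=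
  ⟨hc, fun t ht => h.trans (hb.2 t ht)⟩

theorem effDist_star_iff (hinv : ∀ s : U, star (star s) = s)
    (hfstar : ∀ s : U, f (star s) = f s) :
    EffDist star f (star s) P P' ↔ EffDist star f s P P' := by
  simp only [EffDist, Distinguishes, hinv, hfstar]
  tauto

theorem IsProfileIn.mem_or_star_mem (hfstar : ∀ s : U, f (star s) = f s)
    (hP : IsProfileIn star f P) (hs : s ∈ P ∨ star s ∈ P) (hrs : f r ≤ f s) :
    r ∈ P ∨ star r ∈ P := by
  obtain ⟨k, ⟨hsub, horient⟩, -, -⟩ := hP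
  have hsk : f s < k := hs.elim (fun hs => hsub hs) (fun hs => hfstar s ▸ hsub hs)
  exact (horient r (hrs.trans_lt hsk)).1

theorem IsProfileIn.mem_of_lt (hstar : OrderReversingInvolution star)
    (hfstar : ∀ s : U, f (star s) = f s) (hP : IsProfileIn star f P)
    (hs : s ∈ P) (hrs : r < s) (hf : f r ≤ f s) : r ∈ P := by
  refine (hP.mem_or_star_mem hfstar (Or.inl hs) hf).resolve_right fun hr => ?_
  obtain ⟨k, -, hcons, -⟩ := hP
  exact hcons _ hr _ hs (by rwa [hstar.1])

theorem IsProfileIn.sup_mem (hstar : OrderReversingInvolution star)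
    (hfstar : ∀ s : U, f (star s) = f s) (hP : IsProfileIn star f P)
    (hr : r ∈ P) (hs : s ∈ P) (hf : f (r ⊔ s) ≤ f s) : r ⊔ s ∈ P := by
  refine (hP.mem_or_star_mem hfstar (Or.inl hs) hf).resolve_right fun hrs => ?_
  obtain ⟨k, -, -, hprofile⟩ := hP
  exact hprofile r hr s hs (hstar.star_sup r s ▸ hrs)

theorem EffDist.mem_left_of_lt (hstar : OrderReversingInvolution star)
    (hfstar : ∀ s : U, f (star s) = f s) (hP : IsProfileIn star f P)
    (hP' : IsProfileIn star f P') (ha : EffDist star f a P P') (haP' : a ∈ P')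
    (hca : c < a) (hfc : f c < f a) : c ∈ P := by
  have hcP' : c ∈ P' := hP'.mem_of_lt hstar hfstar haP' hca hfc.le
  refine (hP.mem_or_star_mem hfstar ha.1.mem_or_star_mem_left hfc.le).resolve_right fun hc => ?_
  exact hfc.not_ge (ha.2 c (Or.inr ⟨hc, hcP'⟩))

theorem EffDist.order_le_inf_or_of_mem (hstar : OrderReversingInvolution star)
    (hfstar : ∀ s : U, f (star s) = f s) (hP : IsProfileIn star f P)
    (hP' : IsProfileIn star f P') (hrob : RobustProfile star f P)
    (ha : EffDist star f a P P') (haP : star a ∈ P) (haP' : a ∈ P')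
    (hab : ¬ a ≤ b) (hab' : ¬ a ≤ star b) :
    f a ≤ f (a ⊓ b) ∨ f a ≤ f (a ⊓ star b) := by
  by_contra! h
  exact hrob ⟨a, b, haP,
    ha.mem_left_of_lt hstar hfstar hP hP' haP' (inf_lt_left.2 hab) h.1,
    ha.mem_left_of_lt hstar hfstar hP hP' haP' (inf_lt_left.2 hab') h.2, h.1, h.2⟩

theorem EffDist.sup_le_or_sup_star_le (hstar : OrderReversingInvolution star)
    (hfstar : ∀ s : U, f (star s) = f s)
    (hfsub : ∀ r s : U, f (r ⊔ s) + f (r ⊓ s) ≤ f r + f s)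
    (hP : IsProfileIn star f P) (hP' : IsProfileIn star f P')
    (hrob : RobustProfile star f P) (hrob' : RobustProfile star f P')
    (ha : EffDist star f a P P') (hab : ¬ a ≤ b) (hab' : ¬ a ≤ star b) :
    f (a ⊔ b) ≤ f b ∨ f (a ⊔ star b) ≤ f b := by
  have hinf : f a ≤ f (a ⊓ b) ∨ f a ≤ f (a ⊓ star b) := by
    rcases ha.1 with ⟨haP, haP'⟩ | ⟨haP, haP'⟩
    · exact ha.symm.order_le_inf_or_of_mem hstar hfstar hP' hP hrob' haP' haP hab hab'
    · exact ha.order_le_inf_or_of_mem hstar hfstar hP hP' hrob haP haP' hab hab'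
  refine hinf.imp (fun h => ?_) (fun h => ?_)
  · linarith [hfsub a b]
  · linarith [hfsub a (star b), hfstar b]

theorem distinguishes_sup (hstar : OrderReversingInvolution star)
    (hfstar : ∀ s : U, f (star s) = f s) (hQ : IsProfileIn star f Q)
    (hQ' : IsProfileIn star f Q') (haQ : a ∈ Q) (hbQ : b ∈ Q) (hbQ' : star b ∈ Q')
    (hab : ¬ a ≤ b) (hf : f (a ⊔ b) ≤ f b) : Distinguishes star (a ⊔ b) Q Q' :=
  Or.inl ⟨hQ.sup_mem hstar hfstar haQ hbQ hf,
    hQ'.mem_of_lt hstar hfstar hbQ' (hstar.star_lt_star_iff.2 (right_lt_sup.2 hab))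
      (by rwa [hfstar, hfstar])⟩

theorem exists_corner_effDist_of_mem_of_star_mem (hstar : OrderReversingInvolution star)
    (hfstar : ∀ s : U, f (star s) = f s)
    (hfsub : ∀ r s : U, f (r ⊔ s) + f (r ⊓ s) ≤ f r + f s)
    (hP : IsProfileIn star f P) (hP' : IsProfileIn star f P')
    (hQ : IsProfileIn star f Q) (hQ' : IsProfileIn star f Q')
    (hrob : RobustProfile star f P) (hrob' : RobustProfile star f P')
    (ha : EffDist star f a P P') (hb : EffDist star f b Q Q')
    (haQ : a ∈ Q) (haQ' : a ∈ Q') (hbQ : b ∈ Q) (hbQ' : star b ∈ Q')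
    (hcross : Crosses star a b) :
    ∃ c, IsCornerSep star c a b ∧ EffDist star f c Q Q' := by
  rcases ha.sup_le_or_sup_star_le hstar hfstar hfsub hP hP' hrob hrob'
    hcross.not_le hcross.not_le_star with h | h
  · exact ⟨a ⊔ b, ⟨a, b, Or.inl rfl, Or.inl rfl, Or.inl rfl⟩,
      hb.of_le (distinguishes_sup hstar hfstar hQ hQ' haQ hbQ hbQ' hcross.not_le h) h⟩
  · refine ⟨a ⊔ star b, ⟨a, star b, Or.inl rfl, Or.inr rfl, Or.inl rfl⟩, hb.of_le ?_ h⟩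
    exact (distinguishes_sup hstar hfstar hQ' hQ haQ' hbQ' (by rwa [hstar.1])
      hcross.not_le_star (by rwa [hfstar])).symm

theorem exists_corner_effDist_of_mem (hstar : OrderReversingInvolution star)
    (hfstar : ∀ s : U, f (star s) = f s)
    (hfsub : ∀ r s : U, f (r ⊔ s) + f (r ⊓ s) ≤ f r + f s)
    (hP : IsProfileIn star f P) (hP' : IsProfileIn star f P')
    (hQ : IsProfileIn star f Q) (hQ' : IsProfileIn star f Q')
    (hrob : RobustProfile star f P) (hrob' : RobustProfile star f P')
    (ha : EffDist star f a P P') (hb : EffDist star f b Q Q')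
    (haQ : a ∈ Q) (haQ' : a ∈ Q') (hcross : Crosses star a b) :
    ∃ c, IsCornerSep star c a b ∧ EffDist star f c Q Q' := by
  rcases hb.1 with ⟨hbQ, hbQ'⟩ | ⟨hbQ, hbQ'⟩
  · exact exists_corner_effDist_of_mem_of_star_mem hstar hfstar hfsub hP hP' hQ hQ'
      hrob hrob' ha hb haQ haQ' hbQ hbQ' hcross
  · obtain ⟨c, hc, hcQ⟩ := exists_corner_effDist_of_mem_of_star_mem hstar hfstar hfsub
      hP hP' hQ' hQ hrob hrob' ha hb.symm haQ' haQ hbQ' hbQ hcross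
    exact ⟨c, hc, hcQ.symm⟩

theorem exists_corner_effDist (hstar : OrderReversingInvolution star)
    (hfstar : ∀ s : U, f (star s) = f s)
    (hfsub : ∀ r s : U, f (r ⊔ s) + f (r ⊓ s) ≤ f r + f s)
    (hP : IsProfileIn star f P) (hP' : IsProfileIn star f P')
    (hQ : IsProfileIn star f Q) (hQ' : IsProfileIn star f Q')
    (hrob : RobustProfile star f P) (hrob' : RobustProfile star f P')
    (ha : EffDist star f a P P') (hb : EffDist star f b Q Q')
    (ha_not_effDist : ¬ EffDist star f a Q Q') (hcross : Crosses star a b)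
    (hle : f a ≤ f b) :
    ∃ c, IsCornerSep star c a b ∧ EffDist star f c Q Q' := by
  have hnd : ¬ Distinguishes star a Q Q' := fun h => ha_not_effDist (hb.of_le h hle)
  rcases hQ.mem_or_star_mem hfstar hb.1.mem_or_star_mem_left hle with haQ | haQ <;>
    rcases hQ'.mem_or_star_mem hfstar hb.1.symm.mem_or_star_mem_left hle with haQ' | haQ'
  · exact exists_corner_effDist_of_mem hstar hfstar hfsub hP hP' hQ hQ' hrob hrob' ha hb
      haQ haQ' hcross
  · exact absurd (Or.inl ⟨haQ, haQ'⟩) hnd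
  · exact absurd (Or.inr ⟨haQ, haQ'⟩) hnd
  · obtain ⟨c, hc, hcQ⟩ := exists_corner_effDist_of_mem hstar hfstar hfsub hP hP' hQ hQ'
      hrob hrob' ((effDist_star_iff hstar.1 hfstar).2 ha) hb haQ haQ'
      ((crosses_star_left_iff hstar.1).2 hcross)
    exact ⟨c, hc.of_star_left hstar.1, hcQ⟩

end

theorem efficient_distinguishers_splinter_general [Lattice U]
    (star : U → U) (hstar : OrderReversingInvolution star)
    (f : U → ℝ) (hfstar : ∀ s : U, f (star s) = f s)
    (hfsub : ∀ r s : U, f (r ⊔ s) + f (r ⊓ s) ≤ f r + f s)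
    (Ps : Set (Set U))
    (hprof : ∀ P ∈ Ps, IsProfileIn star f P)
    (hrobust : ∀ P ∈ Ps, RobustProfile star f P) :
    Splinters star
      (fun pp : {pp : Set U × Set U //
          pp.1 ∈ Ps ∧ pp.2 ∈ Ps ∧ ∃ s, Distinguishes star s pp.1 pp.2} =>
        {a | EffDist star f a pp.1.1 pp.1.2}) := by
  rintro ⟨⟨P, P'⟩, hP, hP', -⟩ ⟨⟨Q, Q'⟩, hQ, hQ', -⟩
  intro a ha ha_not b hb hb_not hcross
  rcases le_total (f a) (f b) with hle | hle
  · obtain ⟨c, hc, hcQ⟩ := exists_corner_effDist hstar hfstar hfsub (hprof P hP) (hprof P' hP')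
      (hprof Q hQ) (hprof Q' hQ') (hrobust P hP) (hrobust P' hP') ha hb ha_not hcross hle
    exact ⟨c, hc, Or.inr hcQ⟩
  · obtain ⟨c, hc, hcP⟩ := exists_corner_effDist hstar hfstar hfsub (hprof Q hQ) (hprof Q' hQ')
      (hprof P hP) (hprof P' hP') (hrobust Q hQ) (hrobust Q' hQ') hb ha hb_not
      (hcross.symm hstar) hle
    exact ⟨c, hc.symm, Or.inl hcP⟩

/-- For a robust set `Ps` of profiles in a submodular universe, the family of
the sets `A_{P,P'}` of efficient distinguishers of pairs of distinguishable
profiles in `Ps` splinters. -/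
theorem efficient_distinguishers_splinter [Lattice U] [Fintype U]
    (star : U → U) (hstar : OrderReversingInvolution star)
    (f : U → ℝ) (hf0 : ∀ s : U, 0 ≤ f s) (hfstar : ∀ s : U, f (star s) = f s)
    (hfsub : ∀ r s : U, f (r ⊔ s) + f (r ⊓ s) ≤ f r + f s)
    (Ps : Set (Set U))
    (hprof : ∀ P ∈ Ps, IsProfileIn star f P)
    (hrobust : ∀ P ∈ Ps, RobustProfile star f P) :
    Splinters star
      (fun pp : {pp : Set U × Set U //
          pp.1 ∈ Ps ∧ pp.2 ∈ Ps ∧ ∃ s, Distinguishes star s pp.1 pp.2} =>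
        {a | EffDist star f a pp.1.1 pp.1.2}) :=
  efficient_distinguishers_splinter_general star hstar f hfstar hfsub Ps hprof hrobust
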